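/- Let E be a nonzero real Banach space and A a norm-closed linear monotone subspace of E × E*. Then the following are equivalent: (i) the adjoint subspace A* ⊆ E* × E** is monotone; (ii) for all (y*, y**) ∈ E* × E**, inf_{(x, x*) ∈ A} ⟨y* − x*, y** − x̂⟩ ≤ 0; (iii) for all (y*, y**) ∈ A⁰, inf_{(x, x*) ∈ A} ⟨y* − x*, y** − x̂⟩ ≤ 0; (iv) A is maximally monotone of type (NI). -/

import Mathlib

/-!
On a monotone subspace `A` the quadratic form `x*(x)` is nonnegative, so for `(y*, y**) ∈ A⁰` the
infimum in (ii) equals `⟨y*, y**⟩`; as `(y*, y**) ∈ A⁰` iff `(y*, -y**) ∈ A*`, this gives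
(i) ⇔ (iii).

The heart is (iii) ⇒ (ii). Let `m` be a finite infimum for some `(y*, y**)` and `(x, x*) ∈ A` an
`ε²`-minimizer. Minimality along the line through `(x, x*)` bounds `√(x*(x))` by
`√(⟨y*, y**⟩ - m) + ε`. Minimality in every direction of `A` makes the linear part
`(y* - x*, y** - x̂)` of the pairing around `(x, x*)` a functional of norm `≤ 2ε` on `A`;
subtracting a Hahn–Banach extension of it gives a point of `A⁰`, where (iii) yields
`⟨y*, y**⟩ ≤ x*(x) + O(ε)`. Together, `m = O(ε)`.

Finally (ii) forces maximality: a point `(z, z*) ∉ A` monotonically related to `A` is separated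
from the closed subspace `A` by some `(w*, w**)`, and (ii) fails at `(z*, ẑ) + t (w*, w**)` for
small `t > 0`.
-/

open NormedSpace

/-- A nonempty subset of `E × E*` is monotone. -/
def MonoSet {E : Type*} [NormedAddCommGroup E] [NormedSpace ℝ E]
    (A : Set (E × StrongDual ℝ E)) : Prop :=
  A.Nonempty ∧ ∀ p ∈ A, ∀ q ∈ A, 0 ≤ (p.2 - q.2) (p.1 - q.1)

/-- A nonempty subset of `E* × E**` is monotone. -/
def MonoSetStar {E : Type*} [NormedAddCommGroup E] [NormedSpace ℝ E]
    (D : Set (StrongDual ℝ E × StrongDual ℝ (StrongDual ℝ E))) : Prop :=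
  D.Nonempty ∧ ∀ p ∈ D, ∀ q ∈ D, 0 ≤ (p.2 - q.2) (p.1 - q.1)

/-- Maximal monotonicity in `E × E*`. -/
def MaxMonoSet {E : Type*} [NormedAddCommGroup E] [NormedSpace ℝ E]
    (A : Set (E × StrongDual ℝ E)) : Prop :=
  MonoSet A ∧ ∀ A' : Set (E × StrongDual ℝ E), MonoSet A' → A ⊆ A' → A' = A

/-- The Arens adjoint subspace `A* ⊆ E* × E**` of a linear subspace `A ⊆ E × E*`. -/
def adjointSubspace {E : Type*} [NormedAddCommGroup E] [NormedSpace ℝ E]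
    (A : Set (E × StrongDual ℝ E)) : Set (StrongDual ℝ E × StrongDual ℝ (StrongDual ℝ E)) :=
  {q | ∀ p ∈ A, q.1 p.1 = q.2 p.2}

section General

variable {V : Type*} [NormedAddCommGroup V] [NormedSpace ℝ V]

theorem Submodule.exists_strongDual_eq_zero_eq_one_of_notMem {A : Subspace ℝ V}
    (hclosed : IsClosed (A : Set V)) {z : V} (hz : z ∉ A) :
    ∃ Φ : StrongDual ℝ V, (∀ a ∈ A, Φ a = 0) ∧ Φ z = 1 := by
  obtain ⟨f, u, hfA, hfz⟩ := geometric_hahn_banach_closed_point A.convex hclosed hz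
  have hf0 : ∀ a ∈ A, f a = 0 := by
    intro a ha
    by_contra hfa
    have := hfA ((u / f a) • a) (A.smul_mem _ ha)
    rw [map_smul, smul_eq_mul, div_mul_cancel₀ _ hfa] at this
    exact lt_irrefl u this
  have hfz0 : f z ≠ 0 := (lt_trans (by simpa using hfA 0 A.zero_mem) hfz).ne'
  exact ⟨(f z)⁻¹ • f, fun a ha => by simp [hf0 a ha], by simp [hfz0]⟩

variable {F : Type*} [NormedAddCommGroup F] [NormedSpace ℝ F]

theorem Submodule.exists_coprod_eqOn_of_abs_le {A : Subspace ℝ (V × F)}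
    (φ : StrongDual ℝ (V × F)) {C : ℝ} (hC : 0 ≤ C) (hφ : ∀ v ∈ A, |φ v| ≤ C * ‖v‖) :
    ∃ (e' : StrongDual ℝ V) (e'' : StrongDual ℝ F), ‖e'‖ ≤ C ∧ ‖e''‖ ≤ C ∧
      ∀ v ∈ A, e' v.1 + e'' v.2 = φ v := by
  have hres : ‖φ.comp A.subtypeL‖ ≤ C :=
    ContinuousLinearMap.opNorm_le_bound _ hC fun v => hφ v v.2
  obtain ⟨Φ, hΦ, hΦnorm⟩ := exists_extension_norm_eq A (φ.comp A.subtypeL)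
  have hΦC : ‖Φ‖ ≤ C := hΦnorm ▸ hres
  refine ⟨Φ.comp (.inl ℝ V F), Φ.comp (.inr ℝ V F),
    (Φ.opNorm_comp_le _).trans <| (mul_le_of_le_one_right (norm_nonneg _)
      (ContinuousLinearMap.norm_inl_le_one ℝ V F)).trans hΦC,
    (Φ.opNorm_comp_le _).trans <| (mul_le_of_le_one_right (norm_nonneg _)
      (ContinuousLinearMap.norm_inr_le_one ℝ V F)).trans hΦC,
    fun v hv => (Φ.comp_inl_add_comp_inr v).trans (hΦ ⟨v, hv⟩)⟩

end General

theorem sq_le_four_mul_of_forall_mul_le {l s M : ℝ} (h : ∀ t : ℝ, t * l ≤ M + t ^ 2 * s) :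
    l ^ 2 ≤ 4 * s * M := by
  have := discrim_le_zero (a := s) (b := -l) (c := M) fun t => by nlinarith [h t]
  rw [discrim] at this
  linarith

section NI

variable {E : Type*} [NormedAddCommGroup E] [NormedSpace ℝ E]

noncomputable def niPairing (y' : StrongDual ℝ E) (y'' : StrongDual ℝ (StrongDual ℝ E))
    (p : E × StrongDual ℝ E) : ℝ :=
  (y'' - inclusionInDoubleDual ℝ E p.1) (y' - p.2)

theorem niPairing_eq (y' : StrongDual ℝ E) (y'' : StrongDual ℝ (StrongDual ℝ E))
    (p : E × StrongDual ℝ E) : niPairing y' y'' p = y'' y' - (y' p.1 + y'' p.2) + p.2 p.1 := by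
  simp only [niPairing, sub_apply, map_sub, NormedSpace.dual_def]
  ring

theorem niPairing_add (y' : StrongDual ℝ E) (y'' : StrongDual ℝ (StrongDual ℝ E))
    (p q : E × StrongDual ℝ E) :
    niPairing y' y'' (p + q) = niPairing (y' - p.2) (y'' - inclusionInDoubleDual ℝ E p.1) q := by
  simp only [niPairing, Prod.fst_add, Prod.snd_add, map_add]
  congr 1 <;> abel

theorem niPairing_smul (y' : StrongDual ℝ E) (y'' : StrongDual ℝ (StrongDual ℝ E))
    (t : ℝ) (p : E × StrongDual ℝ E) :
    niPairing y' y'' (t • p) = y'' y' - t * (y' p.1 + y'' p.2) + t ^ 2 * p.2 p.1 := by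
  simp only [niPairing_eq, Prod.smul_fst, Prod.smul_snd, map_smul, smul_eq_mul,
    smul_apply]
  ring

theorem apply_self_le_norm_sq (p : E × StrongDual ℝ E) : p.2 p.1 ≤ ‖p‖ ^ 2 :=
  calc p.2 p.1 ≤ ‖p.2‖ * ‖p.1‖ := (le_abs_self _).trans (p.2.le_opNorm p.1)
    _ ≤ ‖p‖ ^ 2 := by
      nlinarith [norm_fst_le p, norm_snd_le p, norm_nonneg p.1, norm_nonneg p.2]

variable {A : Subspace ℝ (E × StrongDual ℝ E)}

theorem MonoSet.apply_self_nonneg (hA : MonoSet (A : Set (E × StrongDual ℝ E)))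
    {p : E × StrongDual ℝ E} (hp : p ∈ A) : 0 ≤ p.2 p.1 := by
  simpa using hA.2 p hp 0 A.zero_mem

theorem MonoSet.iInf_niPairing_of_annihilates (hA : MonoSet (A : Set (E × StrongDual ℝ E)))
    {y' : StrongDual ℝ E} {y'' : StrongDual ℝ (StrongDual ℝ E)}
    (hann : ∀ p ∈ A, y' p.1 + y'' p.2 = 0) : ⨅ p : A, niPairing y' y'' p = y'' y' := by
  have hge : ∀ p : A, y'' y' ≤ niPairing y' y'' p := fun p => by
    rw [niPairing_eq, hann p p.2]
    linarith [hA.apply_self_nonneg p.2]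
  refine le_antisymm ?_ (le_ciInf hge)
  simpa [niPairing_eq] using ciInf_le ⟨_, Set.forall_mem_range.2 hge⟩ (0 : A)

theorem monoSetStar_adjointSubspace_iff (A : Set (E × StrongDual ℝ E)) :
    MonoSetStar (adjointSubspace A) ↔
      ∀ (y' : StrongDual ℝ E) (y'' : StrongDual ℝ (StrongDual ℝ E)),
        (∀ p ∈ A, y' p.1 + y'' p.2 = 0) → y'' y' ≤ 0 := by
  constructor
  · rintro ⟨-, hmono⟩ y' y'' hann
    have hmem : (y', -y'') ∈ adjointSubspace A := fun p hp => by
      simp [eq_neg_of_add_eq_zero_left (hann p hp)]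
    simpa using hmono _ hmem 0 fun p _ => by simp
  · refine fun h => ⟨⟨0, fun p _ => by simp⟩, fun p hp q hq => ?_⟩
    have := h (p.1 - q.1) (q.2 - p.2) fun v hv => by
      simp only [sub_apply]
      linarith [hp v hv, hq v hv]
    simp only [sub_apply, map_sub] at this ⊢
    linarith

theorem MonoSet.forall_annihilator_iInf_niPairing_nonpos_iff
    (hA : MonoSet (A : Set (E × StrongDual ℝ E))) :
    (∀ (y' : StrongDual ℝ E) (y'' : StrongDual ℝ (StrongDual ℝ E)),
      (∀ p ∈ A, y' p.1 + y'' p.2 = 0) → ⨅ p : A, niPairing y' y'' p ≤ 0) ↔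
      ∀ (y' : StrongDual ℝ E) (y'' : StrongDual ℝ (StrongDual ℝ E)),
        (∀ p ∈ A, y' p.1 + y'' p.2 = 0) → y'' y' ≤ 0 :=
  forall₂_congr fun _ _ => forall_congr' fun hann => by
    rw [hA.iInf_niPairing_of_annihilates hann]

theorem abs_apply_le_of_forall_apply_le {z' : StrongDual ℝ E}
    {z'' : StrongDual ℝ (StrongDual ℝ E)} {ε : ℝ} (hε : 0 ≤ ε)
    (h : ∀ q ∈ A, z' q.1 + z'' q.2 ≤ ε ^ 2 + q.2 q.1) {q : E × StrongDual ℝ E} (hq : q ∈ A) :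
    |z' q.1 + z'' q.2| ≤ 2 * ε * ‖q‖ := by
  have hline : ∀ t : ℝ, t * (z' q.1 + z'' q.2) ≤ ε ^ 2 + t ^ 2 * q.2 q.1 := fun t => by
    have := h (t • q) (A.smul_mem t hq)
    simp only [Prod.smul_fst, Prod.smul_snd, map_smul, smul_apply, smul_eq_mul] at this
    linarith
  have hsq := sq_le_four_mul_of_forall_mul_le hline
  refine abs_le_of_sq_le_sq ?_ (by positivity)
  nlinarith [apply_self_le_norm_sq q, sq_nonneg ε]

theorem le_apply_self_add_of_near_minimizer
    (hiii : ∀ (y' : StrongDual ℝ E) (y'' : StrongDual ℝ (StrongDual ℝ E)),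
      (∀ p ∈ A, y' p.1 + y'' p.2 = 0) → y'' y' ≤ 0)
    {y' : StrongDual ℝ E} {y'' : StrongDual ℝ (StrongDual ℝ E)} {m ε : ℝ} (hε : 0 ≤ ε)
    (hm : ∀ q ∈ A, m ≤ niPairing y' y'' q) {p : E × StrongDual ℝ E} (hp : p ∈ A)
    (hpm : niPairing y' y'' p ≤ m + ε ^ 2) :
    y'' y' ≤ p.2 p.1 + 2 * ε * (‖y'‖ + ‖y''‖) + 4 * ε ^ 2 := by
  set z' := y' - p.2
  set z'' := y'' - inclusionInDoubleDual ℝ E p.1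
  have hz : ∀ q ∈ A, z' q.1 + z'' q.2 ≤ ε ^ 2 + q.2 q.1 := fun q hq => by
    have := hm (p + q) (A.add_mem hp hq)
    rw [niPairing_add, niPairing_eq] at this
    have hp' : niPairing y' y'' p = z'' z' := rfl
    linarith
  -- `(z', z'')` is the linear part of the pairing around `p`; being small on `A`, it can be
  -- corrected by a small `(e', e'')` into the annihilator of `A`.
  obtain ⟨e', e'', he', he'', hext⟩ := A.exists_coprod_eqOn_of_abs_le (z'.coprod z'')
    (by positivity) fun q hq => abs_apply_le_of_forall_apply_le hε hz hq
  have hann : ∀ q ∈ A, (z' - e') q.1 + (z'' - e'') q.2 = 0 := fun q hq => by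
    have := hext q hq
    simp only [ContinuousLinearMap.coprod_apply, sub_apply] at this ⊢
    linarith
  have h0 := hiii _ _ hann
  have hp' := hext p hp
  have b1 : y'' e' ≤ ‖y''‖ * (2 * ε) :=
    (Real.le_norm_self _).trans (y''.le_of_opNorm_le_of_le le_rfl he')
  have b2 : e'' y' ≤ 2 * ε * ‖y'‖ :=
    (Real.le_norm_self _).trans (e''.le_of_opNorm_le_of_le he'' le_rfl)
  have b3 : -(e'' e') ≤ 2 * ε * (2 * ε) :=
    (neg_le_abs _).trans (e''.le_of_opNorm_le_of_le he'' he')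
  simp only [z', z'', ContinuousLinearMap.coprod_apply, sub_apply, map_sub,
    NormedSpace.dual_def] at h0 hp'
  linarith

theorem MonoSet.sqrt_apply_self_lt_of_near_minimizer
    (hA : MonoSet (A : Set (E × StrongDual ℝ E)))
    {y' : StrongDual ℝ E} {y'' : StrongDual ℝ (StrongDual ℝ E)} {m ε : ℝ} (hε : 0 ≤ ε)
    (hm : ∀ q ∈ A, m ≤ niPairing y' y'' q) {p : E × StrongDual ℝ E} (hp : p ∈ A)
    (hpm : niPairing y' y'' p < m + ε ^ 2) :
    √(p.2 p.1) < √(y'' y' - m) + ε := by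
  set S := p.2 p.1
  set M := y'' y' - m
  set L := y' p.1 + y'' p.2
  have hS : 0 ≤ S := hA.apply_self_nonneg hp
  have hM : 0 ≤ M := by simpa [niPairing_eq, M] using hm 0 A.zero_mem
  have hL2 : L ^ 2 ≤ 4 * S * M := sq_le_four_mul_of_forall_mul_le fun t => by
    have := hm (t • p) (A.smul_mem t hp)
    rw [niPairing_smul] at this
    linarith
  have hL : L ≤ 2 * √S * √M := by
    refine (abs_le_of_sq_le_sq' ?_ (by positivity)).2
    nlinarith [Real.sq_sqrt hS, Real.sq_sqrt hM]
  have hML : M + S - ε ^ 2 < L := by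
    rw [niPairing_eq] at hpm
    linarith
  have hsq : (√S - √M) ^ 2 < ε ^ 2 := by nlinarith [Real.sq_sqrt hS, Real.sq_sqrt hM]
  linarith [(abs_lt_of_sq_lt_sq' hsq hε).2]

open Filter Topology in
theorem MonoSet.iInf_niPairing_nonpos_of_annihilator
    (hA : MonoSet (A : Set (E × StrongDual ℝ E)))
    (hiii : ∀ (y' : StrongDual ℝ E) (y'' : StrongDual ℝ (StrongDual ℝ E)),
      (∀ p ∈ A, y' p.1 + y'' p.2 = 0) → y'' y' ≤ 0)
    (y' : StrongDual ℝ E) (y'' : StrongDual ℝ (StrongDual ℝ E)) :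
    ⨅ p : A, niPairing y' y'' p ≤ 0 := by
  by_cases hbdd : BddBelow (Set.range fun p : A => niPairing y' y'' p)
  swap
  · rw [Real.iInf_of_not_bddBelow hbdd]
  set m := ⨅ p : A, niPairing y' y'' p
  have hm : ∀ q ∈ A, m ≤ niPairing y' y'' q := fun q hq => ciInf_le hbdd ⟨q, hq⟩
  have hM : 0 ≤ y'' y' - m := by simpa [niPairing_eq] using hm 0 A.zero_mem
  set a := √(y'' y' - m)
  set K := 2 * a + 2 * (‖y'‖ + ‖y''‖)
  have hbound : ∀ ε > 0, m ≤ ε * (K + 5 * ε) := fun ε hε => by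
    obtain ⟨p, hpm⟩ := exists_lt_of_ciInf_lt (lt_add_of_pos_right m (pow_pos hε 2))
    have hS := hA.sqrt_apply_self_lt_of_near_minimizer hε.le hm p.2 hpm
    have hc := le_apply_self_add_of_near_minimizer hiii hε.le hm p.2 hpm.le
    have hS' : p.1.2 p.1.1 < (a + ε) ^ 2 := by
      rw [← Real.sq_sqrt (hA.apply_self_nonneg p.2)]
      exact pow_lt_pow_left₀ hS (Real.sqrt_nonneg _) two_ne_zero
    nlinarith [Real.sq_sqrt hM]
  have hlim : Tendsto (fun ε => ε * (K + 5 * ε)) (𝓝[>] 0) (𝓝 0) := by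
    refine ((Continuous.tendsto ?_ 0).mono_left nhdsWithin_le_nhds).trans_eq (by simp)
    fun_prop
  exact ge_of_tendsto hlim (eventually_nhdsWithin_of_forall hbound)

theorem mem_of_forall_apply_sub_nonneg (hclosed : IsClosed (A : Set (E × StrongDual ℝ E)))
    (hii : ∀ (y' : StrongDual ℝ E) (y'' : StrongDual ℝ (StrongDual ℝ E)),
      ⨅ p : A, niPairing y' y'' p ≤ 0)
    {z : E × StrongDual ℝ E} (hz : ∀ q ∈ A, 0 ≤ (z.2 - q.2) (z.1 - q.1)) : z ∈ A := by
  by_contra hzA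
  obtain ⟨Φ, hΦA, hΦz⟩ := A.exists_strongDual_eq_zero_eq_one_of_notMem hclosed hzA
  set w' := Φ.comp (.inl ℝ E (StrongDual ℝ E))
  set w'' := Φ.comp (.inr ℝ E (StrongDual ℝ E))
  have hΦ : ∀ v, Φ v = w' v.1 + w'' v.2 := fun v => (Φ.comp_inl_add_comp_inr v).symm
  set t := (|w'' w'| + 1)⁻¹
  have ht : 0 < t := by positivity
  have ht1 : t * (|w'' w'| + 1) = 1 := inv_mul_cancel₀ (by positivity)
  have hlow : ∀ q : A, t ^ 2 * w'' w' + t ≤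
      niPairing (t • w' + z.2) (t • w'' + inclusionInDoubleDual ℝ E z.1) q := fun q => by
    have h1 := hz q q.2
    have h2 := hΦA q q.2
    rw [hΦ] at h2 hΦz
    simp only [niPairing_eq, add_apply, smul_apply, sub_apply, map_add, map_sub, map_smul,
      smul_eq_mul, NormedSpace.dual_def] at h1 ⊢
    nlinarith
  have := (le_ciInf hlow).trans (hii _ _)
  nlinarith [neg_abs_le (w'' w')]

theorem maxMonoSet_of_iInf_niPairing_nonpos (hclosed : IsClosed (A : Set (E × StrongDual ℝ E)))
    (hA : MonoSet (A : Set (E × StrongDual ℝ E)))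
    (hii : ∀ (y' : StrongDual ℝ E) (y'' : StrongDual ℝ (StrongDual ℝ E)),
      ⨅ p : A, niPairing y' y'' p ≤ 0) :
    MaxMonoSet (A : Set (E × StrongDual ℝ E)) :=
  ⟨hA, fun _ hA' hsub => Set.Subset.antisymm (fun z hz =>
    mem_of_forall_apply_sub_nonneg hclosed hii fun q hq => hA'.2 z hz q (hsub hq)) hsub⟩

end NI

theorem stmt16_general (E : Type*) [NormedAddCommGroup E] [NormedSpace ℝ E]
    (A : Subspace ℝ (E × StrongDual ℝ E)) (hclosed : IsClosed (A : Set (E × StrongDual ℝ E)))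
    (hmono : MonoSet (A : Set (E × StrongDual ℝ E))) :
    -- (i) ↔ (ii)
    (MonoSetStar (adjointSubspace (A : Set (E × StrongDual ℝ E))) ↔
      (∀ (y' : StrongDual ℝ E) (y'' : StrongDual ℝ (StrongDual ℝ E)),
        ⨅ p : A, ((y'' - inclusionInDoubleDual ℝ E ((p : E × StrongDual ℝ E)).1)
          (y' - ((p : E × StrongDual ℝ E)).2)) ≤ 0)) ∧
    -- (ii) ↔ (iii)
    ((∀ (y' : StrongDual ℝ E) (y'' : StrongDual ℝ (StrongDual ℝ E)),
        ⨅ p : A, ((y'' - inclusionInDoubleDual ℝ E ((p : E × StrongDual ℝ E)).1)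
          (y' - ((p : E × StrongDual ℝ E)).2)) ≤ 0) ↔
      (∀ (y' : StrongDual ℝ E) (y'' : StrongDual ℝ (StrongDual ℝ E)),
        (∀ p ∈ A, y' p.1 + y'' p.2 = 0) →
        ⨅ p : A, ((y'' - inclusionInDoubleDual ℝ E ((p : E × StrongDual ℝ E)).1)
          (y' - ((p : E × StrongDual ℝ E)).2)) ≤ 0)) ∧
    -- (iii) ↔ (iv)
    ((∀ (y' : StrongDual ℝ E) (y'' : StrongDual ℝ (StrongDual ℝ E)),
        (∀ p ∈ A, y' p.1 + y'' p.2 = 0) →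
        ⨅ p : A, ((y'' - inclusionInDoubleDual ℝ E ((p : E × StrongDual ℝ E)).1)
          (y' - ((p : E × StrongDual ℝ E)).2)) ≤ 0) ↔
      (MaxMonoSet (A : Set (E × StrongDual ℝ E)) ∧
        ∀ (y' : StrongDual ℝ E) (y'' : StrongDual ℝ (StrongDual ℝ E)),
          ⨅ p : A, ((y'' - inclusionInDoubleDual ℝ E ((p : E × StrongDual ℝ E)).1)
            (y' - ((p : E × StrongDual ℝ E)).2)) ≤ 0)) := by
  have h_i_iff := monoSetStar_adjointSubspace_iff (A : Set (E × StrongDual ℝ E))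
  have h_iii_iff := hmono.forall_annihilator_iInf_niPairing_nonpos_iff
  have h_ii := hmono.iInf_niPairing_nonpos_of_annihilator
  have h_max := maxMonoSet_of_iInf_niPairing_nonpos hclosed hmono
  exact ⟨h_i_iff.trans ⟨h_ii, fun h => h_iii_iff.1 fun y' y'' _ => h y' y''⟩,
    ⟨fun h y' y'' _ => h y' y'', fun h => h_ii (h_iii_iff.1 h)⟩,
    ⟨fun h => ⟨h_max (h_ii (h_iii_iff.1 h)), h_ii (h_iii_iff.1 h)⟩,
      fun h y' y'' _ => h.2 y' y''⟩⟩

theorem stmt16 (E : Type*) [NormedAddCommGroup E] [NormedSpace ℝ E] [CompleteSpace E]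
    [Nontrivial E]
    (A : Subspace ℝ (E × StrongDual ℝ E)) (hclosed : IsClosed (A : Set (E × StrongDual ℝ E)))
    (hmono : MonoSet (A : Set (E × StrongDual ℝ E))) :
    -- (i) ↔ (ii)
    (MonoSetStar (adjointSubspace (A : Set (E × StrongDual ℝ E))) ↔
      (∀ (y' : StrongDual ℝ E) (y'' : StrongDual ℝ (StrongDual ℝ E)),
        ⨅ p : A, ((y'' - inclusionInDoubleDual ℝ E ((p : E × StrongDual ℝ E)).1)
          (y' - ((p : E × StrongDual ℝ E)).2)) ≤ 0)) ∧
    -- (ii) ↔ (iii)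
    ((∀ (y' : StrongDual ℝ E) (y'' : StrongDual ℝ (StrongDual ℝ E)),
        ⨅ p : A, ((y'' - inclusionInDoubleDual ℝ E ((p : E × StrongDual ℝ E)).1)
          (y' - ((p : E × StrongDual ℝ E)).2)) ≤ 0) ↔
      (∀ (y' : StrongDual ℝ E) (y'' : StrongDual ℝ (StrongDual ℝ E)),
        (∀ p ∈ A, y' p.1 + y'' p.2 = 0) →
        ⨅ p : A, ((y'' - inclusionInDoubleDual ℝ E ((p : E × StrongDual ℝ E)).1)
          (y' - ((p : E × StrongDual ℝ E)).2)) ≤ 0)) ∧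
    -- (iii) ↔ (iv)
    ((∀ (y' : StrongDual ℝ E) (y'' : StrongDual ℝ (StrongDual ℝ E)),
        (∀ p ∈ A, y' p.1 + y'' p.2 = 0) →
        ⨅ p : A, ((y'' - inclusionInDoubleDual ℝ E ((p : E × StrongDual ℝ E)).1)
          (y' - ((p : E × StrongDual ℝ E)).2)) ≤ 0) ↔
      (MaxMonoSet (A : Set (E × StrongDual ℝ E)) ∧
        ∀ (y' : StrongDual ℝ E) (y'' : StrongDual ℝ (StrongDual ℝ E)),
          ⨅ p : A, ((y'' - inclusionInDoubleDual ℝ E ((p : E × StrongDual ℝ E)).1)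
            (y' - ((p : E × StrongDual ℝ E)).2)) ≤ 0)) :=
  stmt16_general E A hclosed hmono
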